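/- Fix k ≥ 1 and for 1 ≤ j ≤ k set s_{0,j} := 1 + q² + ⋯ + q^{2(k−1−j)} = (q^{2(k−j)} − 1)/(q² − 1). Then det((c_{s_{0,j}}(t^{q^{i−1}}, θ^{q^{j−1}}))_{1≤i,j≤k}) = B_k(t). -/

import Mathlib

/-!
Write `s₀(n) = 1 + q² + ⋯ + q^{2(n-1)}`. The recursion gives `deg_t c_s < n` whenever `s < s₀(n)`,
and the coefficient of `t^n` in `c_{s₀(n)}` is `(-1)^n`: since `s₀(n+1) = 1 + q² s₀(n)` and
`δ_0 = 0`, only the summand `δ_1 (t - θ^q) c_{s₀(n)}(t, θ^{q²})` reaches degree `n + 1`.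
Hence the matrix is the Vandermonde matrix of the `t^{q^i}` times the matrix of `t`-coefficients
of its columns; the latter is anti-triangular, and its antidiagonal entry `(-1)^{k-1-j}` in
column `j` cancels the sign that column contributes, so its determinant is `1`. What remains is the Vandermonde determinant `B_k(t)`.
-/

open Polynomial

/-- The `𝔽_q`-algebra endomorphism of `R = 𝔽_q[t,θ]` (realised as `(𝔽_q[θ])[t]`, with `t` the
outer variable `X` and `θ` the inner variable `C X`) sending `t ↦ t^{q^a}` and `θ ↦ θ^{q^b}`. -/
noncomputable def subst (F : Type) [Field F] (q a b : ℕ) :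
    Polynomial (Polynomial F) →+* Polynomial (Polynomial F) :=
  eval₂RingHom (C.comp (Polynomial.aeval ((X : Polynomial F) ^ q ^ b)).toRingHom)
    ((X : Polynomial (Polynomial F)) ^ q ^ a)

open Finset

namespace Matrix

variable {R : Type*} [CommRing R]

theorem det_of_antitriangular {n : ℕ} (A : Matrix (Fin n) (Fin n) R)
    (hA : ∀ i j : Fin n, n ≤ (i : ℕ) + j → A i j = 0) :
    A.det = ∏ j : Fin n, (-1) ^ (n - 1 - (j : ℕ)) * A (Fin.rev j) j := by
  induction n with
  | zero => simp
  | succ n ih =>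
    have hlast : ∀ j : Fin (n + 1), j ≠ 0 → A (Fin.last n) j = 0 := fun j hj =>
      hA _ _ (by simp only [Fin.val_last]; have := Fin.pos_iff_ne_zero.mpr hj; omega)
    rw [det_succ_row A (Fin.last n), Fintype.sum_eq_single 0 fun j hj => by simp [hlast j hj],
      ih (A.submatrix _ _) fun i j hij => hA _ _ (by simp; omega), Fin.prod_univ_succ]
    simp [Fin.rev_succ, mul_assoc, Nat.sub_sub, Nat.add_comm 1]

theorem of_eval_eq_vandermonde_mul_of_natDegree_lt {n : ℕ} (v : Fin n → R) (p : Fin n → R[X])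
    (hp : ∀ j, (p j).natDegree < n) :
    of (fun i j => (p j).eval (v i)) = vandermonde v * of (fun (i j : Fin n) => (p j).coeff i) := by
  ext i j
  rw [of_apply, eval_eq_sum_range' (hp j), ← Fin.sum_univ_eq_sum_range, mul_apply]
  simp [vandermonde_apply, mul_comm]

theorem det_vandermonde_eq_prod_range (f : ℕ → R) (n : ℕ) :
    (vandermonde fun i : Fin n => f i).det = ∏ j ∈ range n, ∏ i ∈ range j, (f j - f i) := by
  have hIoi (i : Fin n) : ∏ j ∈ Ioi i, (f j - f i) = ∏ j ∈ Ioo (i : ℕ) n, (f j - f i) := by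
    rw [← Fin.map_valEmbedding_Ioi, prod_map]; rfl
  rw [det_vandermonde, Fintype.prod_congr _ _ hIoi,
    Fin.prod_univ_eq_prod_range (fun i => ∏ j ∈ Ioo i n, (f j - f i))]
  exact prod_comm' fun i j => by simp only [mem_range, mem_Ioo]; omega

end Matrix

section
variable (F : Type) [Field F]

theorem subst_apply (q a b : ℕ) (p : F[X][X]) :
    subst F q a b p = (p.map (C.comp (expand F (q ^ b)).toRingHom)).eval (X ^ q ^ a) := by
  rw [eval_map]; rfl

theorem subst_zero_left (q b : ℕ) (p : F[X][X]) :
    subst F q 0 b p = p.map (expand F (q ^ b)).toRingHom := by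
  rw [subst, pow_zero, pow_one, coe_eval₂RingHom]; rfl

noncomputable def twistedConv (q r b : ℕ) (a : ℕ → F[X]) (c : ℕ → F[X][X]) (s : ℕ) : F[X][X] :=
  ∑ ij ∈ range (s + 1) ×ˢ range (s + 1),
    if ij.1 + ij.2 * r = s then C (a ij.1) * subst F q 0 b (c ij.2) else 0

def IsDCoeffs (q : ℕ) (γ δ : ℕ → F[X]) (c : ℕ → F[X][X]) : Prop :=
  ∀ s, 1 ≤ s → c s = twistedConv F q q 1 γ c s + (X - C (X ^ q)) * twistedConv F q (q ^ 2) 2 δ c s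

variable {F}

theorem natDegree_twistedConv_le {q r b s n : ℕ} {a : ℕ → F[X]} {c : ℕ → F[X][X]}
    (h : ∀ i j, i + j * r = s → a i ≠ 0 → (c j).natDegree ≤ n) :
    (twistedConv F q r b a c s).natDegree ≤ n := by
  refine natDegree_sum_le_of_forall_le _ _ fun ij _ => ?_
  split_ifs with hij
  · by_cases ha : a ij.1 = 0
    · simp [ha]
    · rw [subst_zero_left]
      exact (natDegree_C_mul_le _ _).trans (natDegree_map_le.trans (h _ _ hij ha))
  · simp

theorem coeff_twistedConv {q r b s n i₀ j₀ : ℕ} (hr : 0 < r) {a : ℕ → F[X]} {c : ℕ → F[X][X]}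
    (h₀ : i₀ + j₀ * r = s)
    (h : ∀ i j, i + j * r = s → (i, j) ≠ (i₀, j₀) → a i = 0 ∨ (c j).coeff n = 0) :
    (twistedConv F q r b a c s).coeff n = a i₀ * expand F (q ^ b) ((c j₀).coeff n) := by
  have hmem : (i₀, j₀) ∈ range (s + 1) ×ˢ range (s + 1) := by
    simp only [mem_product, mem_range]; constructor <;> nlinarith
  rw [twistedConv, finsetSum_coeff, sum_eq_single_of_mem _ hmem fun ij _ hne => ?_]
  · simp [h₀, subst_zero_left]
  · split_ifs with hij
    · rcases h ij.1 ij.2 hij hne with ha | hc <;> simp [subst_zero_left, *]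
    · simp
end

-- The paper's `s_{0,j}` is `extremalIndex q (k - j)`.
def extremalIndex (q n : ℕ) : ℕ := ∑ m ∈ range n, q ^ (2 * m)

theorem extremalIndex_succ (q n : ℕ) :
    extremalIndex q (n + 1) = 1 + q ^ 2 * extremalIndex q n := by
  rw [extremalIndex, extremalIndex, sum_range_succ', mul_sum, add_comm]
  simp only [mul_zero, pow_zero]
  exact congrArg (1 + ·) (sum_congr rfl fun m _ => by ring)

section
variable {F : Type} [Field F] {q : ℕ} {γ δ : ℕ → F[X]} {c : ℕ → F[X][X]}

theorem IsDCoeffs.natDegree_lt (hc : IsDCoeffs F q γ δ c) (hq : 2 ≤ q) (hc0 : c 0 = 1)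
    (hδ0 : δ 0 = 0) {s n : ℕ} (hs : s < extremalIndex q n) : (c s).natDegree < n := by
  induction s using Nat.strong_induction_on generalizing n with
  | _ s ih =>
  rcases Nat.eq_zero_or_pos s with rfl | hs0
  · simpa [hc0] using Nat.pos_of_ne_zero (by rintro rfl; simp [extremalIndex] at hs)
  obtain _ | _ | n := n
  · simp [extremalIndex] at hs
  · simp [extremalIndex] at hs; omega
  have hq2 : 1 ≤ q ^ 2 := Nat.one_le_pow _ _ (by omega)
  rw [extremalIndex_succ] at hs
  rw [hc s hs0]
  refine (natDegree_add_le _ _).trans_lt (max_lt ?_ ?_)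
  · refine Nat.lt_succ_of_le (natDegree_twistedConv_le fun i j hij _ => ?_)
    have hj : j < s := by nlinarith
    exact Nat.le_of_lt_succ (ih j hj (by rw [extremalIndex_succ]; omega))
  · have hX : (X - C ((X : F[X]) ^ q)).natDegree ≤ 1 := natDegree_X_sub_C_le _
    have hδ : (twistedConv F q (q ^ 2) 2 δ c s).natDegree ≤ n := by
      refine natDegree_twistedConv_le fun i j hij hi => ?_
      have hi : 1 ≤ i := Nat.one_le_iff_ne_zero.mpr (by rintro rfl; exact hi hδ0)
      refine Nat.le_of_lt_succ (ih j (by nlinarith) ?_)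
      exact Nat.lt_of_mul_lt_mul_left (a := q ^ 2) (by nlinarith)
    exact natDegree_mul_le.trans_lt (by omega)

theorem IsDCoeffs.natDegree_extremalIndex_le (hc : IsDCoeffs F q γ δ c) (hq : 2 ≤ q)
    (hc0 : c 0 = 1) (hδ0 : δ 0 = 0) (n : ℕ) : (c (extremalIndex q n)).natDegree ≤ n :=
  Nat.le_of_lt_succ <| hc.natDegree_lt hq hc0 hδ0 <| by
    rw [extremalIndex, extremalIndex, sum_range_succ]; exact Nat.lt_add_of_pos_right (by positivity)

theorem IsDCoeffs.coeff_extremalIndex (hc : IsDCoeffs F q γ δ c) (hq : 2 ≤ q) (hc0 : c 0 = 1)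
    (hδ0 : δ 0 = 0) (hδ1 : δ 1 = -1) (n : ℕ) :
    (c (extremalIndex q n)).coeff n = (-1) ^ n := by
  induction n with
  | zero => simp [extremalIndex, hc0]
  | succ n ih =>
  have hs := extremalIndex_succ q n
  set s := extremalIndex q (n + 1)
  have hq2 : 1 ≤ q ^ 2 := Nat.one_le_pow _ _ (by omega)
  have hdeg {j : ℕ} (hj : j < s) : (c j).natDegree ≤ n :=
    Nat.le_of_lt_succ (hc.natDegree_lt hq hc0 hδ0 hj)
  have hγ : (twistedConv F q q 1 γ c s).natDegree ≤ n :=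
    natDegree_twistedConv_le fun i j hij _ => hdeg (by nlinarith)
  have hδ : (twistedConv F q (q ^ 2) 2 δ c s).natDegree ≤ n := by
    refine natDegree_twistedConv_le fun i j hij hi => hdeg ?_
    have hi : 1 ≤ i := Nat.one_le_iff_ne_zero.mpr (by rintro rfl; exact hi hδ0)
    nlinarith
  have hδtop : (twistedConv F q (q ^ 2) 2 δ c s).coeff n = (-1) ^ (n + 1) := by
    rw [coeff_twistedConv (by positivity) (i₀ := 1) (j₀ := extremalIndex q n) (by rw [hs]; ring)
      fun i j hij hne => ?_, hδ1, ih]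
    · simp [pow_succ]
    obtain _ | _ | i := i
    · exact Or.inl hδ0
    · refine absurd ?_ hne
      rw [Nat.eq_of_mul_eq_mul_right (by omega : 0 < q ^ 2)
        (by linarith : j * q ^ 2 = extremalIndex q n * q ^ 2)]
    · exact Or.inr (coeff_eq_zero_of_natDegree_lt (hc.natDegree_lt hq hc0 hδ0 (by nlinarith)))
  rw [hc s (by omega), coeff_add, coeff_eq_zero_of_natDegree_lt (hγ.trans_lt n.lt_succ_self),
    sub_mul, coeff_sub, coeff_X_mul, coeff_C_mul,
    coeff_eq_zero_of_natDegree_lt (hδ.trans_lt n.lt_succ_self), hδtop]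
  ring
end

theorem det_at_extremal_multiindex_general
    {p : ℕ} (hp : p.Prime) {e : ℕ} (he : 1 ≤ e) {q : ℕ} (hq : q = p ^ e)
    (F : Type) [Field F]
    (γ δ : ℕ → Polynomial F) (hδ0 : δ 0 = 0) (hδ1 : δ 1 = -1)
    (c : ℕ → Polynomial (Polynomial F)) (hc0 : c 0 = 1)
    (hc : ∀ s, 1 ≤ s → c s =
      (∑ ij ∈ Finset.range (s + 1) ×ˢ Finset.range (s + 1),
        if ij.1 + ij.2 * q = s then C (γ ij.1) * subst F q 0 1 (c ij.2) else 0) +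
      (X - C (X ^ q)) *
      (∑ ij ∈ Finset.range (s + 1) ×ˢ Finset.range (s + 1),
        if ij.1 + ij.2 * q ^ 2 = s then C (δ ij.1) * subst F q 0 2 (c ij.2) else 0))
    (k : ℕ) :
    Matrix.det (Matrix.of fun i j : Fin k =>
        subst F q (i : ℕ) (j : ℕ)
          (c (∑ m ∈ Finset.range (k - 1 - (j : ℕ)), q ^ (2 * m)))) =
      ∏ j ∈ Finset.range k, ∏ i ∈ Finset.range j,
        ((X : Polynomial (Polynomial F)) ^ q ^ j - X ^ q ^ i) := by
  have hq2 : 2 ≤ q := hq ▸ hp.two_le.trans (Nat.le_self_pow (by omega) p)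
  have hrec : IsDCoeffs F q γ δ c := hc
  set P : Fin k → F[X][X][X] := fun j =>
    (c (extremalIndex q (k - 1 - j))).map (C.comp (expand F (q ^ (j : ℕ))).toRingHom)
  have hPdeg (j : Fin k) : (P j).natDegree ≤ k - 1 - j :=
    natDegree_map_le.trans (hrec.natDegree_extremalIndex_le hq2 hc0 hδ0 _)
  have hdiag (j : Fin k) : (-1) ^ (k - 1 - (j : ℕ)) * (P j).coeff (Fin.rev j) = 1 := by
    rw [coeff_map, Fin.val_rev, Nat.sub_add_eq, Nat.sub_right_comm,
      hrec.coeff_extremalIndex hq2 hc0 hδ0 hδ1]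
    norm_num [← mul_pow]
  have hM : (Matrix.of fun i j : Fin k =>
        subst F q (i : ℕ) (j : ℕ) (c (∑ m ∈ Finset.range (k - 1 - (j : ℕ)), q ^ (2 * m)))) =
      Matrix.of fun (i j : Fin k) => (P j).eval (X ^ q ^ (i : ℕ)) :=
    Matrix.ext fun i j => subst_apply F _ _ _ _
  rw [hM,
    Matrix.of_eval_eq_vandermonde_mul_of_natDegree_lt _ _ fun j => (hPdeg j).trans_lt (by omega),
    Matrix.det_mul, Matrix.det_vandermonde_eq_prod_range (fun i => X ^ q ^ i),
    Matrix.det_of_antitriangular (Matrix.of fun (i j : Fin k) => (P j).coeff i) fun m j hmj =>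
      coeff_eq_zero_of_natDegree_lt ((hPdeg j).trans_lt (by omega))]
  simp only [Matrix.of_apply, hdiag, prod_const_one, mul_one]

/-- Let `c : ℕ → R` satisfy `c 0 = 1` and, for `s ≥ 1`, the recursion
`c s = Σ_{i+jq=s} γ_i · c_j(t,θ^q) + (t − θ^q) · Σ_{i+jq²=s} δ_i · c_j(t,θ^{q²})`, where
`γ, δ : ℕ → 𝔽_q[θ]` with `γ_0 = 1`, `δ_0 = 0`, `δ_1 = −1`. With
`s_{0,j} = 1 + q² + ⋯ + q^{2(k−1−j)}` (so `s_{0,k} = 0`), one has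
`det((c_{s_{0,j}}(t^{q^{i−1}}, θ^{q^{j−1}}))_{1≤i,j≤k}) = B_k(t)`. -/
theorem det_at_extremal_multiindex
    {p : ℕ} (hp : p.Prime) {e : ℕ} (he : 1 ≤ e) {q : ℕ} (hq : q = p ^ e)
    (F : Type) [Field F] [Fintype F] (hF : Fintype.card F = q)
    (γ δ : ℕ → Polynomial F) (hγ0 : γ 0 = 1) (hδ0 : δ 0 = 0) (hδ1 : δ 1 = -1)
    (c : ℕ → Polynomial (Polynomial F)) (hc0 : c 0 = 1)
    (hc : ∀ s, 1 ≤ s → c s =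
      (∑ ij ∈ Finset.range (s + 1) ×ˢ Finset.range (s + 1),
        if ij.1 + ij.2 * q = s then C (γ ij.1) * subst F q 0 1 (c ij.2) else 0) +
      (X - C (X ^ q)) *
      (∑ ij ∈ Finset.range (s + 1) ×ˢ Finset.range (s + 1),
        if ij.1 + ij.2 * q ^ 2 = s then C (δ ij.1) * subst F q 0 2 (c ij.2) else 0))
    (k : ℕ) (hk : 1 ≤ k) :
    Matrix.det (Matrix.of fun i j : Fin k =>
        subst F q (i : ℕ) (j : ℕ)
          (c (∑ m ∈ Finset.range (k - 1 - (j : ℕ)), q ^ (2 * m)))) =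
      ∏ j ∈ Finset.range k, ∏ i ∈ Finset.range j,
        ((X : Polynomial (Polynomial F)) ^ q ^ j - X ^ q ^ i) :=
  det_at_extremal_multiindex_general hp he hq F γ δ hδ0 hδ1 c hc0 hc k
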